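/- Suppose, in the abstract semidiscrete HDG framework, that Φ ∈ L²(Ω) and that the triple (ψ_h, v_h, λ_h) ∈ S_h × Q_h × M_h satisfies: (v_h, r)_{L²(Ω;ℝ^d)} + b(ψ_h, r) + e(λ_h, r) = 0 for all r ∈ Q_h; −b(w, v_h) + s(ψ_h, w) + f(λ_h, w) = ∫_Ω Φ w dx for all w ∈ S_h; and −e(μ, v_h) + f(μ, ψ_h) + g(λ_h, μ) = 0 for all μ ∈ M_h. Then ‖v_h‖²_{L²(Ω;ℝ^d)} + Q(ψ_h, λ_h) ≤ ½ ‖Φ‖²_{L²(Ω)} + ½ ‖ψ_h‖²_{L²(Ω)}. -/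

import Mathlib

open MeasureTheory Set
open scoped RealInnerProductSpace ENNReal

noncomputable section

/-- Abstract semidiscrete HDG framework on the open bounded set `Ω ⊆ ℝ^d`, with hybrid space `M`. -/
structure HDG (d : ℕ) (Ω : Set (EuclideanSpace ℝ (Fin d)))
    (M : Type) [NormedAddCommGroup M] [NormedSpace ℝ M] where
  hd : d = 2 ∨ d = 3
  hΩopen : IsOpen Ω
  hΩbdd : Bornology.IsBounded Ω
  hΩne : Ω.Nonempty
  Sh : Submodule ℝ (Lp ℝ 2 (volume.restrict Ω))
  Qh : Submodule ℝ (Lp (EuclideanSpace ℝ (Fin d)) 2 (volume.restrict Ω))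
  finS : FiniteDimensional ℝ Sh
  finQ : FiniteDimensional ℝ Qh
  Sh_bdd : ∀ w : Sh, MemLp (⇑(w : Lp ℝ 2 (volume.restrict Ω))) ⊤ (volume.restrict Ω)
  b : Sh →ₗ[ℝ] Qh →ₗ[ℝ] ℝ
  e : M →ₗ[ℝ] Qh →ₗ[ℝ] ℝ
  f : M →ₗ[ℝ] Sh →ₗ[ℝ] ℝ
  s : Sh →ₗ[ℝ] Sh →ₗ[ℝ] ℝ
  g : M →ₗ[ℝ] M →ₗ[ℝ] ℝ
  s_symm : ∀ x y, s x y = s y x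
  g_symm : ∀ x y, g x y = g y x
  Qpos : ∀ (w : Sh) (m : M), 0 ≤ s w w + 2 * f m w + g m m

namespace HDG

variable {d : ℕ} {Ω : Set (EuclideanSpace ℝ (Fin d))} {M : Type}
  [NormedAddCommGroup M] [NormedSpace ℝ M]

/-- An element of the discrete scalar space `S_h ⊆ L²(Ω)`, viewed as a function on `ℝ^d`. -/
def SFn (H : HDG d Ω M) (w : H.Sh) : EuclideanSpace ℝ (Fin d) → ℝ :=
  ⇑(w : Lp ℝ 2 (volume.restrict Ω))

/-- An element of the discrete vector space `Q_h`, viewed as an element of `L²(Ω; ℝ^d)`. -/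
def QLp (H : HDG d Ω M) (v : H.Qh) : Lp (EuclideanSpace ℝ (Fin d)) 2 (volume.restrict Ω) := v

/-- The nonnegative quadratic form `Q(w, μ) = s(w,w) + 2 f(μ,w) + g(μ,μ)`. -/
def Qf (H : HDG d Ω M) (w : H.Sh) (m : M) : ℝ :=
  H.s w w + 2 * H.f m w + H.g m m

/-- Generic energy functional: with arguments `(α t, ∂ₜψ t, ψ t, v t, λ t)` it is the low-order
energy `E⁰(t)`; with `(α t, ∂ₜ²ψ t, ∂ₜψ t, ∂ₜv t, ∂ₜλ t)` it is the high-order energy `E¹(t)`. -/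
def En (H : HDG d Ω M) (c k : ℝ) (a dψ ψ : H.Sh) (v : H.Qh) (l : M) : ℝ :=
  (1/2) * (∫ x, (1 + 2*k*(H.SFn a x)) * (H.SFn dψ x)^2 ∂(volume.restrict Ω))
  + c^2/2 * (‖v‖^2 + H.Qf ψ l)

/-- The triple `(ψ, v, l)` solves the linearized semidiscrete HDG system on `[0,T]` with
coefficient `α`, forcing `φ` and perturbation `υ`. -/
def SolvesLin (H : HDG d Ω M) (c δ k T : ℝ) (α : ℝ → H.Sh)
    (φ : ℝ → Lp ℝ 2 (volume.restrict Ω))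
    (υ : ℝ → Lp (EuclideanSpace ℝ (Fin d)) 2 (volume.restrict Ω))
    (ψ : ℝ → H.Sh) (v : ℝ → H.Qh) (l : ℝ → M) : Prop :=
  ContDiffOn ℝ 2 ψ (Icc 0 T) ∧ ContDiffOn ℝ 1 v (Icc 0 T) ∧ ContDiffOn ℝ 1 l (Icc 0 T) ∧
  ContDiffOn ℝ 1 α (Icc 0 T) ∧ ContinuousOn φ (Icc 0 T) ∧ ContDiffOn ℝ 1 υ (Icc 0 T) ∧
  ∀ t ∈ Icc (0:ℝ) T,
    (∀ r : H.Qh,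
      ⟪H.QLp (v t), H.QLp r⟫ + H.b (ψ t) r + H.e (l t) r = ⟪υ t, H.QLp r⟫) ∧
    (∀ w : H.Sh,
      (∫ x, (1 + 2*k*(H.SFn (α t) x))
          * (H.SFn (derivWithin (derivWithin ψ (Icc 0 T)) (Icc 0 T) t) x)
          * (H.SFn w x) ∂(volume.restrict Ω))
        - c^2 * H.b w (v t + (δ/c^2) • derivWithin v (Icc 0 T) t)
        + c^2 * H.s (ψ t + (δ/c^2) • derivWithin ψ (Icc 0 T) t) w
        + c^2 * H.f (l t + (δ/c^2) • derivWithin l (Icc 0 T) t) w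
      = ∫ x, (φ t x) * (H.SFn w x) ∂(volume.restrict Ω)) ∧
    (∀ m : M, - H.e m (v t) + H.f m (ψ t) + H.g (l t) m = 0)

end HDG

theorem MeasureTheory.L2.integral_mul_eq_inner {α : Type*} [MeasurableSpace α] {μ : Measure α}
    (f g : Lp ℝ 2 μ) : ∫ x, f x * g x ∂μ = ⟪f, g⟫ := by
  rw [L2.inner_def]
  exact integral_congr_ae (ae_of_all _ fun x => (Real.inner_apply (f x) (g x)).symm)

theorem real_inner_le_half_norm_sq_add_half_norm_sq {F : Type*} [NormedAddCommGroup F]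
    [InnerProductSpace ℝ F] (x y : F) : ⟪x, y⟫ ≤ (1/2) * ‖x‖^2 + (1/2) * ‖y‖^2 := by
  nlinarith [real_inner_le_norm x y, sq_nonneg (‖x‖ - ‖y‖)]

namespace HDG

variable {d : ℕ} {Ω : Set (EuclideanSpace ℝ (Fin d))} {M : Type}
  [NormedAddCommGroup M] [NormedSpace ℝ M]

/-- Adding the three equations tested with the solution itself, the coupling terms `b` and `e`
cancel. -/
theorem norm_sq_add_Qf_eq (H : HDG d Ω M) {ψ : H.Sh} {v : H.Qh} {l : M} {F : ℝ}
    (h1 : ⟪H.QLp v, H.QLp v⟫ + H.b ψ v + H.e l v = 0)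
    (h2 : - H.b ψ v + H.s ψ ψ + H.f l ψ = F)
    (h3 : - H.e l v + H.f l ψ + H.g l l = 0) :
    ‖v‖^2 + H.Qf ψ l = F := by
  have hv : ⟪H.QLp v, H.QLp v⟫ = ‖v‖^2 := real_inner_self_eq_norm_sq _
  rw [Qf]
  linarith

end HDG

theorem stmt_7_general {d : ℕ} {Ω : Set (EuclideanSpace ℝ (Fin d))} {M : Type}
    [NormedAddCommGroup M] [NormedSpace ℝ M]
    (H : HDG d Ω M) (Φ : Lp ℝ 2 (volume.restrict Ω))
    (ψ : H.Sh) (v : H.Qh) (l : M)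
    (heq1 : ∀ r : H.Qh, ⟪H.QLp v, H.QLp r⟫ + H.b ψ r + H.e l r = 0)
    (heq2 : ∀ w : H.Sh,
      - H.b w v + H.s ψ w + H.f l w = ∫ x, (Φ x) * (H.SFn w x) ∂(volume.restrict Ω))
    (heq3 : ∀ m : M, - H.e m v + H.f m ψ + H.g l m = 0) :
    ‖v‖^2 + H.Qf ψ l ≤ (1/2) * ‖Φ‖^2 + (1/2) * ‖ψ‖^2 := by
  calc ‖v‖^2 + H.Qf ψ l = ⟪Φ, (ψ : Lp ℝ 2 (volume.restrict Ω))⟫ :=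
        H.norm_sq_add_Qf_eq (heq1 v)
          ((heq2 ψ).trans (L2.integral_mul_eq_inner _ _)) (heq3 l)
    _ ≤ (1/2) * ‖Φ‖^2 + (1/2) * ‖ψ‖^2 := real_inner_le_half_norm_sq_add_half_norm_sq _ _

/-- Stability estimate for the discrete elliptic HDG problem defining the discrete initial
conditions. -/
theorem stmt_7 {d : ℕ} {Ω : Set (EuclideanSpace ℝ (Fin d))} {M : Type}
    [NormedAddCommGroup M] [NormedSpace ℝ M] [FiniteDimensional ℝ M]
    (H : HDG d Ω M) (Φ : Lp ℝ 2 (volume.restrict Ω))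
    (ψ : H.Sh) (v : H.Qh) (l : M)
    (heq1 : ∀ r : H.Qh, ⟪H.QLp v, H.QLp r⟫ + H.b ψ r + H.e l r = 0)
    (heq2 : ∀ w : H.Sh,
      - H.b w v + H.s ψ w + H.f l w = ∫ x, (Φ x) * (H.SFn w x) ∂(volume.restrict Ω))
    (heq3 : ∀ m : M, - H.e m v + H.f m ψ + H.g l m = 0) :
    ‖v‖^2 + H.Qf ψ l ≤ (1/2) * ‖Φ‖^2 + (1/2) * ‖ψ‖^2 :=
  stmt_7_general H Φ ψ v l heq1 heq2 heq3
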